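/- Let δ = 2^{-mT} with m,T ∈ ℕ, and let P be a {2^{-jT}}_{j=1}^m-uniform family of dyadic δ-cubes in [0,1)^d satisfying c·Δ^{-t} ≤ |P|_Δ ≤ C·Δ^{-t} for all Δ ∈ [δ, Δ₀], where t ∈ [0,d] and Δ₀ ∈ (δ,1]. Then for all dyadic δ ≤ r ≤ R ≤ 1 and every dyadic R-cube Q, one has |P ∩ Q|_r ≲_{d,T,Δ₀} (C/c)(R/r)^t. -/

import Mathlib

/-!
Index the dyadic cubes of side `2^{-n}` by `x ↦ ⌊2^n x⌋`; a cube of side `2^{-a}` contains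
`2^{(b-a)d}` cubes of side `2^{-b}`. Uniformity makes the branching number `M` of `P` between
the scales `2^{-aT}` and `2^{-bT}` constant, so `|P|_{2^{-bT}} = M |P|_{2^{-aT}}`, and the
two-sided count bounds give `M ≲ (C/c) 2^{(b-a)Tt}`; scales coarser than `Δ₀` are reached by
comparing with `2^{-n₀} ≤ Δ₀` at a cost of `2^{d n₀}`. For a `2^{-j}`-cube `Q`, round `j` up and
`i` down to multiples `aT`, `bT` of `T`: then `|P ∩ Q|_{2^{-i}} ≤ 2^{Td} M 2^{Td}`.
-/

noncomputable def covN (d : ℕ) (ρ : ℝ) (X : Set (EuclideanSpace ℝ (Fin d))) : ℕ :=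
  Set.ncard {k : Fin d → ℤ | ∃ x ∈ X, ∀ i, (k i : ℝ) * ρ ≤ x i ∧ x i < ((k i : ℝ) + 1) * ρ}

def dyCube (d : ℕ) (ρ : ℝ) (k : Fin d → ℤ) : Set (EuclideanSpace ℝ (Fin d)) :=
  {x | ∀ i, (k i : ℝ) * ρ ≤ x i ∧ x i < ((k i : ℝ) + 1) * ρ}

def unitBox (d : ℕ) : Set (EuclideanSpace ℝ (Fin d)) :=
  {x | ∀ i, 0 ≤ x i ∧ x i < 1}

def IsUniform (d T m : ℕ) (P : Set (EuclideanSpace ℝ (Fin d))) : Prop :=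
  ∃ N : ℕ → ℕ, (∀ j, 1 ≤ j → j ≤ m → ∃ i : ℕ, N j = 2 ^ i) ∧
    ∀ j, 1 ≤ j → j ≤ m → ∀ k : Fin d → ℤ,
      (P ∩ dyCube d ((2:ℝ) ^ (-(((j - 1) * T : ℕ) : ℤ))) k).Nonempty →
      covN d ((2:ℝ) ^ (-((j * T : ℕ) : ℤ)))
        (P ∩ dyCube d ((2:ℝ) ^ (-(((j - 1) * T : ℕ) : ℤ))) k) = N j

theorem Set.ncard_eq_sum_ncard_inter_preimage {α β : Type*} [DecidableEq β] {A : Set α}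
    (hA : A.Finite) {f : α → β} {B : Finset β} (hAB : Set.MapsTo f A B) :
    A.ncard = ∑ y ∈ B, (A ∩ f ⁻¹' {y}).ncard := by
  rw [Set.ncard_eq_toFinset_card A hA, Finset.card_eq_sum_card_fiberwise (by simpa using hAB)]
  refine Finset.sum_congr rfl fun y _ => ?_
  rw [Set.ncard_eq_toFinset_card _ (hA.inter_of_left _)]
  congr 1
  ext a
  simp

theorem two_zpow_neg_rpow_neg (n : ℕ) (t : ℝ) : ((2:ℝ) ^ (-(n:ℤ))) ^ (-t) = 2 ^ (t * n) := by
  rw [← Real.rpow_intCast, ← Real.rpow_mul zero_le_two]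
  push_cast
  ring_nf

theorem two_zpow_neg_div_two_zpow_neg_rpow (i j : ℕ) (t : ℝ) :
    ((2:ℝ) ^ (-(j:ℤ)) / 2 ^ (-(i:ℤ))) ^ t = 2 ^ (t * (i - j)) := by
  rw [← zpow_sub₀ two_ne_zero, ← Real.rpow_intCast, ← Real.rpow_mul zero_le_two]
  push_cast
  ring_nf

theorem exists_two_zpow_neg_le {Δ : ℝ} (hΔ : 0 < Δ) : ∃ n : ℕ, (2:ℝ) ^ (-(n:ℤ)) ≤ Δ := by
  obtain ⟨n, hn⟩ := exists_pow_lt_of_lt_one hΔ (by norm_num : (2:ℝ)⁻¹ < 1)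
  exact ⟨n, by simpa [zpow_neg, inv_pow] using hn.le⟩

section Dyadic

variable {d : ℕ}

noncomputable def dyadicIndex (n : ℕ) (x : EuclideanSpace ℝ (Fin d)) : Fin d → ℤ :=
  fun i => ⌊x i * 2 ^ n⌋

noncomputable def dyadicCount (n : ℕ) (X : Set (EuclideanSpace ℝ (Fin d))) : ℕ :=
  (dyadicIndex n '' X).ncard

def coarsenIndex (s : ℕ) (k : Fin d → ℤ) : Fin d → ℤ :=
  fun i => k i / 2 ^ s

theorem dyCube_eq_preimage_dyadicIndex (n : ℕ) (k : Fin d → ℤ) :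
    dyCube d ((2:ℝ) ^ (-(n:ℤ))) k = dyadicIndex n ⁻¹' {k} := by
  have h2n : (0:ℝ) < 2 ^ n := by positivity
  ext x
  simp only [dyCube, Set.mem_ofPred_eq, Set.mem_preimage, Set.mem_singleton_iff, funext_iff,
    dyadicIndex, Int.floor_eq_iff, zpow_neg, zpow_natCast, ← div_eq_mul_inv,
    div_le_iff₀ h2n, lt_div_iff₀ h2n]

theorem covN_eq_dyadicCount (n : ℕ) (X : Set (EuclideanSpace ℝ (Fin d))) :
    covN d ((2:ℝ) ^ (-(n:ℤ))) X = dyadicCount n X := by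
  unfold covN dyadicCount
  congr 1
  ext k
  refine exists_congr fun x => and_congr_right fun _ => ?_
  change x ∈ dyCube d _ k ↔ _
  rw [dyCube_eq_preimage_dyadicIndex]
  rfl

theorem coarsenIndex_dyadicIndex {a b : ℕ} (hab : a ≤ b) (x : EuclideanSpace ℝ (Fin d)) :
    coarsenIndex (b - a) (dyadicIndex b x) = dyadicIndex a x := by
  funext i
  have h : x i * 2 ^ a = x i * 2 ^ b / ((2 ^ (b - a) : ℕ) : ℝ) := by
    rw [← Nat.add_sub_cancel' hab, pow_add, Nat.add_sub_cancel_left]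
    push_cast
    field_simp
  simp only [coarsenIndex, dyadicIndex]
  rw [h, Int.floor_div_natCast]
  push_cast
  rfl

theorem preimage_dyadicIndex_of_le {a b : ℕ} (hab : a ≤ b) (S : Set (Fin d → ℤ)) :
    dyadicIndex a ⁻¹' S = dyadicIndex b ⁻¹' (coarsenIndex (b - a) ⁻¹' S) := by
  ext x
  simp [coarsenIndex_dyadicIndex hab]

theorem image_dyadicIndex_of_le {a b : ℕ} (hab : a ≤ b) (X : Set (EuclideanSpace ℝ (Fin d))) :
    dyadicIndex a '' X = coarsenIndex (b - a) '' (dyadicIndex b '' X) := by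
  rw [← Set.image_comp]
  exact Set.image_congr fun x _ => (coarsenIndex_dyadicIndex hab x).symm

theorem finite_image_dyadicIndex (n : ℕ) {X : Set (EuclideanSpace ℝ (Fin d))}
    (hX : X ⊆ unitBox d) : (dyadicIndex n '' X).Finite := by
  refine (Set.Finite.pi fun _ : Fin d => Set.finite_Ico (0 : ℤ) (2 ^ n)).subset ?_
  rintro _ ⟨x, hx, rfl⟩ i -
  have h2n : (0:ℝ) < 2 ^ n := by positivity
  refine ⟨Int.floor_nonneg.mpr (mul_nonneg (hX hx i).1 h2n.le), Int.floor_lt.mpr ?_⟩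
  push_cast
  nlinarith [(hX hx i).2]

theorem image_dyadicIndex_inter_preimage {a b : ℕ} (hab : a ≤ b)
    (X : Set (EuclideanSpace ℝ (Fin d))) (k : Fin d → ℤ) :
    dyadicIndex b '' (X ∩ dyadicIndex a ⁻¹' {k}) =
      dyadicIndex b '' X ∩ coarsenIndex (b - a) ⁻¹' {k} := by
  rw [preimage_dyadicIndex_of_le hab, Set.image_inter_preimage]

theorem dyadicCount_eq_sum {a b : ℕ} (hab : a ≤ b) {X : Set (EuclideanSpace ℝ (Fin d))}
    (hX : X ⊆ unitBox d) :
    dyadicCount b X = ∑ k ∈ (finite_image_dyadicIndex a hX).toFinset,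
      dyadicCount b (X ∩ dyadicIndex a ⁻¹' {k}) := by
  classical
  refine (Set.ncard_eq_sum_ncard_inter_preimage (finite_image_dyadicIndex b hX)
    (f := coarsenIndex (b - a)) (B := (finite_image_dyadicIndex a hX).toFinset) ?_).trans ?_
  · rintro _ ⟨x, hx, rfl⟩
    simpa [coarsenIndex_dyadicIndex hab] using Set.mem_image_of_mem _ hx
  · simp only [dyadicCount, image_dyadicIndex_inter_preimage hab]

theorem preimage_coarsenIndex_subset (s : ℕ) (k : Fin d → ℤ) :
    coarsenIndex s ⁻¹' {k} ⊆
      Fintype.piFinset fun i => Finset.Ico (k i * 2 ^ s) (k i * 2 ^ s + 2 ^ s) := by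
  intro y hy
  have h2s : (0:ℤ) < 2 ^ s := by positivity
  simp only [Set.mem_preimage, Set.mem_singleton_iff, coarsenIndex, funext_iff] at hy
  simp only [Fintype.coe_piFinset, Set.mem_pi, Set.mem_univ, Finset.coe_Ico, Set.mem_Ico,
    forall_const]
  intro i
  rw [← hy i]
  constructor
  · exact Int.ediv_mul_le _ h2s.ne'
  · linarith [Int.lt_ediv_add_one_mul_self (y i) h2s]

theorem dyadicCount_inter_preimage_le {a b : ℕ} (hab : a ≤ b)
    (X : Set (EuclideanSpace ℝ (Fin d))) (k : Fin d → ℤ) :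
    dyadicCount b (X ∩ dyadicIndex a ⁻¹' {k}) ≤ 2 ^ ((b - a) * d) := by
  rw [dyadicCount, image_dyadicIndex_inter_preimage hab]
  calc _ ≤ (Fintype.piFinset fun i => Finset.Ico (k i * 2 ^ (b - a))
        (k i * 2 ^ (b - a) + 2 ^ (b - a))).card := by
        rw [← Set.ncard_coe_finset]
        exact Set.ncard_le_ncard (Set.inter_subset_right.trans
          (preimage_coarsenIndex_subset _ k)) (Finset.finite_toSet _)
    _ = 2 ^ ((b - a) * d) := by simp [Int.card_Ico, pow_mul, Int.toNat_pow_of_nonneg]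

theorem dyadicCount_mono {a b : ℕ} (hab : a ≤ b) {X : Set (EuclideanSpace ℝ (Fin d))}
    (hX : X ⊆ unitBox d) : dyadicCount a X ≤ dyadicCount b X := by
  rw [dyadicCount, image_dyadicIndex_of_le hab]
  exact Set.ncard_image_le (finite_image_dyadicIndex b hX)

theorem dyadicCount_le_mul_pow {a b : ℕ} (hab : a ≤ b) {X : Set (EuclideanSpace ℝ (Fin d))}
    (hX : X ⊆ unitBox d) : dyadicCount b X ≤ dyadicCount a X * 2 ^ ((b - a) * d) := by
  rw [dyadicCount_eq_sum hab hX, dyadicCount, Set.ncard_eq_toFinset_card _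
    (finite_image_dyadicIndex a hX), ← smul_eq_mul, ← Finset.sum_const]
  exact Finset.sum_le_sum fun k _ => dyadicCount_inter_preimage_le hab X k

/-- Every `2^{-a}`-cube meeting `X` contains exactly `M` of the `2^{-b}`-cubes meeting `X`. -/
def HasBranching (X : Set (EuclideanSpace ℝ (Fin d))) (a b M : ℕ) : Prop :=
  ∀ k ∈ dyadicIndex a '' X, dyadicCount b (X ∩ dyadicIndex a ⁻¹' {k}) = M

theorem hasBranching_self (X : Set (EuclideanSpace ℝ (Fin d))) (a : ℕ) :
    HasBranching X a a 1 := by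
  intro k hk
  rw [dyadicCount, Set.image_inter_preimage, Set.inter_eq_right.mpr (by simpa using hk),
    Set.ncard_singleton]

theorem HasBranching.dyadicCount_eq {X : Set (EuclideanSpace ℝ (Fin d))} {a b M : ℕ}
    (h : HasBranching X a b M) (hab : a ≤ b) (hX : X ⊆ unitBox d) :
    dyadicCount b X = dyadicCount a X * M := by
  rw [dyadicCount_eq_sum hab hX, Finset.sum_congr rfl fun k hk => h k (by simpa using hk),
    Finset.sum_const, smul_eq_mul, dyadicCount,
    Set.ncard_eq_toFinset_card _ (finite_image_dyadicIndex a hX)]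

theorem inter_preimage_dyadicIndex_eq {X : Set (EuclideanSpace ℝ (Fin d))} {j a : ℕ}
    (hja : j ≤ a) {k k' : Fin d → ℤ} (hk' : k' ∈ dyadicIndex a '' (X ∩ dyadicIndex j ⁻¹' {k})) :
    X ∩ dyadicIndex j ⁻¹' {k} ∩ dyadicIndex a ⁻¹' {k'} = X ∩ dyadicIndex a ⁻¹' {k'} := by
  obtain ⟨x, ⟨-, hxk⟩, rfl⟩ := hk'
  refine Set.inter_right_comm _ _ _ ▸ Set.inter_eq_left.mpr fun y ⟨_, hy⟩ => ?_
  simp only [Set.mem_preimage, Set.mem_singleton_iff] at hy hxk ⊢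
  rw [← coarsenIndex_dyadicIndex hja, hy, coarsenIndex_dyadicIndex hja, hxk]

theorem HasBranching.inter_preimage {X : Set (EuclideanSpace ℝ (Fin d))} {a b M : ℕ}
    (h : HasBranching X a b M) {j : ℕ} (hja : j ≤ a) (k : Fin d → ℤ) :
    HasBranching (X ∩ dyadicIndex j ⁻¹' {k}) a b M := by
  intro k' hk'
  rw [inter_preimage_dyadicIndex_eq hja hk']
  exact h k' (Set.image_mono Set.inter_subset_left hk')

theorem HasBranching.trans {X : Set (EuclideanSpace ℝ (Fin d))} {a b c M M' : ℕ}
    (h₁ : HasBranching X a b M) (h₂ : HasBranching X b c M') (hab : a ≤ b) (hbc : b ≤ c)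
    (hX : X ⊆ unitBox d) : HasBranching X a c (M * M') := by
  intro k hk
  rw [(h₂.inter_preimage hab k).dyadicCount_eq hbc (Set.inter_subset_left.trans hX), h₁ k hk]

theorem IsUniform.exists_hasBranching {T m : ℕ} {P : Set (EuclideanSpace ℝ (Fin d))}
    (hU : IsUniform d T m P) (hP : P ⊆ unitBox d) {a b : ℕ} (hab : a ≤ b) (hbm : b ≤ m) :
    ∃ M, HasBranching P (a * T) (b * T) M := by
  obtain ⟨N, -, hN⟩ := hU
  induction b, hab using Nat.le_induction with
  | base => exact ⟨1, hasBranching_self P _⟩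
  | succ b hab ih =>
    obtain ⟨M, hM⟩ := ih (by omega)
    have hstep : HasBranching P (b * T) ((b + 1) * T) (N (b + 1)) := by
      intro k ⟨x, hx⟩
      have h := hN (b + 1) (by omega) hbm k
      simp only [Nat.add_sub_cancel, dyCube_eq_preimage_dyadicIndex,
        covN_eq_dyadicCount] at h
      exact h ⟨x, hx⟩
    exact ⟨M * N (b + 1), hM.trans hstep (Nat.mul_le_mul_right _ hab)
      (Nat.mul_le_mul_right _ b.le_succ) hP⟩

def HasDyadicCountBounds (P : Set (EuclideanSpace ℝ (Fin d))) (c C t : ℝ) (n₀ N : ℕ) : Prop :=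
  ∀ n, n₀ ≤ n → n ≤ N →
    c * 2 ^ (t * n) ≤ dyadicCount n P ∧ (dyadicCount n P : ℝ) ≤ C * 2 ^ (t * n)

section CountBounds

variable {P : Set (EuclideanSpace ℝ (Fin d))} {c C t : ℝ} {n₀ N : ℕ}

theorem HasDyadicCountBounds.lower_le_upper (h : HasDyadicCountBounds P c C t n₀ N)
    (hn₀ : n₀ ≤ N) : c ≤ C := by
  have h₀ := h n₀ le_rfl hn₀
  exact le_of_mul_le_mul_right (h₀.1.trans h₀.2) (by positivity)

theorem HasDyadicCountBounds.dyadicCount_le (h : HasDyadicCountBounds P c C t n₀ N)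
    (hP : P ⊆ unitBox d) (hn₀ : n₀ ≤ N) (htd : t ≤ d) {n : ℕ} (hn : n ≤ N) :
    (dyadicCount n P : ℝ) ≤ 2 ^ (d * n₀) * C * 2 ^ (t * n) := by
  have hC : 0 ≤ C := nonneg_of_mul_nonneg_left
    ((Nat.cast_nonneg _).trans (h n₀ le_rfl hn₀).2) (by positivity)
  rcases le_total n₀ n with hn₀n | hnn₀
  · calc (dyadicCount n P : ℝ) ≤ C * 2 ^ (t * n) := (h n hn₀n hn).2
      _ ≤ 2 ^ (d * n₀) * (C * 2 ^ (t * n)) :=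
        le_mul_of_one_le_left (by positivity) (one_le_pow₀ one_le_two)
      _ = _ := by ring
  · have hexp : t * (n₀ - n : ℕ) ≤ (d * n₀ : ℕ) := by
      push_cast [hnn₀]
      nlinarith [(Nat.cast_le (α := ℝ)).mpr hnn₀, (Nat.cast_nonneg (α := ℝ) n)]
    calc (dyadicCount n P : ℝ) ≤ dyadicCount n₀ P := by exact_mod_cast dyadicCount_mono hnn₀ hP
      _ ≤ C * 2 ^ (t * n₀) := (h n₀ le_rfl hn₀).2
      _ = C * 2 ^ (t * n) * 2 ^ (t * (n₀ - n : ℕ)) := by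
        rw [mul_assoc, ← Real.rpow_add two_pos]
        push_cast [hnn₀]
        ring_nf
      _ ≤ C * 2 ^ (t * n) * 2 ^ (d * n₀) := by
        gcongr
        exact (Real.rpow_le_rpow_of_exponent_le one_le_two hexp).trans_eq (by norm_cast)
      _ = _ := by ring

theorem HasDyadicCountBounds.le_dyadicCount (h : HasDyadicCountBounds P c C t n₀ N)
    (hP : P ⊆ unitBox d) (hn₀ : n₀ ≤ N) (hc : 0 ≤ c) (ht : 0 ≤ t) {n : ℕ} (hn : n ≤ N) :
    c * 2 ^ (t * n) ≤ 2 ^ (d * n₀) * dyadicCount n P := by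
  rcases le_total n₀ n with hn₀n | hnn₀
  · exact (h n hn₀n hn).1.trans (le_mul_of_one_le_left (by positivity) (one_le_pow₀ one_le_two))
  · calc c * 2 ^ (t * n) ≤ c * 2 ^ (t * n₀) := by
          gcongr
          exact one_le_two
      _ ≤ dyadicCount n₀ P := (h n₀ le_rfl hn₀).1
      _ ≤ dyadicCount n P * 2 ^ ((n₀ - n) * d) := by
          exact_mod_cast dyadicCount_le_mul_pow hnn₀ hP
      _ ≤ dyadicCount n P * 2 ^ (d * n₀) := by
          gcongr dyadicCount n P * ?_
          refine pow_le_pow_right₀ one_le_two ?_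
          rw [mul_comm]
          exact Nat.mul_le_mul_left _ (Nat.sub_le _ _)
      _ = _ := mul_comm _ _

theorem HasBranching.le_of_hasDyadicCountBounds {a b M : ℕ} (hM : HasBranching P a b M)
    (h : HasDyadicCountBounds P c C t n₀ N) (hP : P ⊆ unitBox d) (hn₀ : n₀ ≤ N) (hab : a ≤ b)
    (hbN : b ≤ N) (hc : 0 < c) (ht : 0 ≤ t) (htd : t ≤ d) :
    (M : ℝ) ≤ 2 ^ (2 * (d * n₀)) * (C / c) * 2 ^ (t * (b - a)) := by
  refine le_of_mul_le_mul_left ?_ (by positivity : 0 < c * 2 ^ (t * a))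
  calc c * 2 ^ (t * a) * M ≤ 2 ^ (d * n₀) * dyadicCount a P * M :=
        mul_le_mul_of_nonneg_right (h.le_dyadicCount hP hn₀ hc.le ht (hab.trans hbN))
          (Nat.cast_nonneg _)
    _ = 2 ^ (d * n₀) * dyadicCount b P := by
        rw [hM.dyadicCount_eq hab hP]
        push_cast
        ring
    _ ≤ 2 ^ (d * n₀) * (2 ^ (d * n₀) * C * 2 ^ (t * b)) := by
        gcongr
        exact h.dyadicCount_le hP hn₀ htd hbN
    _ = c * 2 ^ (t * a) * (2 ^ (2 * (d * n₀)) * (C / c) * 2 ^ (t * (b - a))) := by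
        rw [show t * b = t * (b - a) + t * a by ring, Real.rpow_add two_pos]
        field_simp
        ring

end CountBounds

theorem HasBranching.dyadicCount_inter_le {P : Set (EuclideanSpace ℝ (Fin d))}
    {α β M : ℕ} (hM : HasBranching P α β M) (hP : P ⊆ unitBox d) {i j : ℕ} (hjα : j ≤ α)
    (hαβ : α ≤ β) (hβi : β ≤ i) (k : Fin d → ℤ) :
    dyadicCount i (P ∩ dyadicIndex j ⁻¹' {k}) ≤ 2 ^ ((α - j) * d) * M * 2 ^ ((i - β) * d) := by
  set Q := P ∩ dyadicIndex j ⁻¹' {k}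
  have hQ : Q ⊆ unitBox d := Set.inter_subset_left.trans hP
  calc dyadicCount i Q ≤ dyadicCount β Q * 2 ^ ((i - β) * d) := dyadicCount_le_mul_pow hβi hQ
    _ = dyadicCount α Q * M * 2 ^ ((i - β) * d) := by
      rw [(hM.inter_preimage hjα k).dyadicCount_eq hαβ hQ]
    _ ≤ _ := by
      gcongr
      exact dyadicCount_inter_preimage_le hjα P k

theorem IsUniform.dyadicCount_inter_le_of_mul_le {T m n₀ : ℕ}
    {P : Set (EuclideanSpace ℝ (Fin d))} {c C t : ℝ} (hU : IsUniform d T m P)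
    (hP : P ⊆ unitBox d) (h : HasDyadicCountBounds P c C t n₀ (m * T)) (hn₀ : n₀ ≤ m * T)
    (hc : 0 < c) (ht : 0 ≤ t) (htd : t ≤ d) {a b i j : ℕ} (hja : j ≤ a * T)
    (haj : a * T ≤ j + T) (hab : a ≤ b) (hbi : b * T ≤ i) (hib : i ≤ b * T + T) (hbm : b ≤ m)
    (k : Fin d → ℤ) :
    (dyadicCount i (P ∩ dyadicIndex j ⁻¹' {k}) : ℝ) ≤
      2 ^ (2 * (T * d) + 2 * (d * n₀)) * (C / c) * 2 ^ (t * (i - j)) := by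
  obtain ⟨M, hM⟩ := hU.exists_hasBranching hP hab hbm
  have hMle := hM.le_of_hasDyadicCountBounds h hP hn₀ (Nat.mul_le_mul_right T hab)
    (Nat.mul_le_mul_right T hbm) hc ht htd
  have hexp : t * ((b * T : ℕ) - (a * T : ℕ) : ℝ) ≤ t * (i - j) := by gcongr
  calc (dyadicCount i (P ∩ dyadicIndex j ⁻¹' {k}) : ℝ)
      ≤ 2 ^ ((a * T - j) * d) * M * 2 ^ ((i - b * T) * d) := by
        exact_mod_cast hM.dyadicCount_inter_le hP hja (Nat.mul_le_mul_right T hab) hbi k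
    _ ≤ 2 ^ (T * d) * M * 2 ^ (T * d) := by
        gcongr <;> first | exact one_le_two | omega
    _ ≤ 2 ^ (T * d) * (2 ^ (2 * (d * n₀)) * (C / c) * 2 ^ (t * (i - j))) * 2 ^ (T * d) := by
        gcongr
        exact hMle.trans (mul_le_mul_of_nonneg_left
          (Real.rpow_le_rpow_of_exponent_le one_le_two hexp)
          (by have := hc.trans_le (h.lower_le_upper hn₀); positivity))
    _ = _ := by ring

/-- The scales `2^{-j}`, `2^{-i}` are rounded inwards to multiples of `T`, unless no multiple
of `T` separates them, in which case `i - j < T` and the cube capacity suffices. -/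
theorem IsUniform.dyadicCount_inter_le {T m n₀ : ℕ} {P : Set (EuclideanSpace ℝ (Fin d))}
    {c C t : ℝ} (hU : IsUniform d T m P) (hT : 1 ≤ T) (hP : P ⊆ unitBox d)
    (h : HasDyadicCountBounds P c C t n₀ (m * T)) (hn₀ : n₀ ≤ m * T) (hc : 0 < c) (ht : 0 ≤ t)
    (htd : t ≤ d) {i j : ℕ} (hji : j ≤ i) (him : i ≤ m * T) (k : Fin d → ℤ) :
    (dyadicCount i (P ∩ dyadicIndex j ⁻¹' {k}) : ℝ) ≤
      2 ^ (2 * (T * d) + 2 * (d * n₀)) * (C / c) * 2 ^ (t * (i - j)) := by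
  obtain ⟨a, hja, haj⟩ : ∃ a, j ≤ a * T ∧ a * T < j + T :=
    ⟨(j + T - 1) / T, by have := Nat.lt_div_mul_add (a := j + T - 1) hT; omega,
      by have := Nat.div_mul_le_self (j + T - 1) T; omega⟩
  obtain ⟨b, hbi, hib⟩ : ∃ b, b * T ≤ i ∧ i < b * T + T :=
    ⟨i / T, Nat.div_mul_le_self i T, Nat.lt_div_mul_add hT⟩
  rcases le_or_gt a b with hab | hba
  · exact hU.dyadicCount_inter_le_of_mul_le hP h hn₀ hc ht htd hja haj.le hab hbi hib.le
      (Nat.le_of_mul_le_mul_right (hbi.trans him) hT) k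
  have hij : i - j ≤ T := by
    have := Nat.mul_le_mul_right T (Nat.succ_le_of_lt hba)
    rw [Nat.succ_mul] at this
    omega
  have hCc : 1 ≤ C / c := (one_le_div hc).mpr (h.lower_le_upper hn₀)
  have hji' : (j : ℝ) ≤ i := by exact_mod_cast hji
  calc (dyadicCount i (P ∩ dyadicIndex j ⁻¹' {k}) : ℝ) ≤ 2 ^ ((i - j) * d) := by
        exact_mod_cast dyadicCount_inter_preimage_le hji P k
    _ ≤ 2 ^ (2 * (T * d) + 2 * (d * n₀)) := pow_le_pow_right₀ one_le_two (by nlinarith)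
    _ ≤ 2 ^ (2 * (T * d) + 2 * (d * n₀)) * (C / c) * 2 ^ (t * (i - j)) := by
        rw [mul_assoc]
        refine le_mul_of_one_le_right (by positivity) (one_le_mul_of_one_le_of_one_le hCc ?_)
        exact Real.one_le_rpow one_le_two (mul_nonneg ht (sub_nonneg.mpr hji'))

end Dyadic
theorem stmt12_general (d T : ℕ) (Δ₀ : ℝ) (hT : 1 ≤ T) :
    ∃ K : ℝ, 0 < K ∧
    ∀ (m : ℕ) (c C t : ℝ) (P : Set (EuclideanSpace ℝ (Fin d))),
      1 ≤ m → 0 < c → 0 < C → 0 ≤ t → t ≤ d →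
      (2:ℝ) ^ (-((m * T : ℕ) : ℤ)) < Δ₀ →
      P ⊆ unitBox d → IsUniform d T m P →
      (∀ Δ : ℝ, (2:ℝ) ^ (-((m * T : ℕ) : ℤ)) ≤ Δ → Δ ≤ Δ₀ →
        c * Δ ^ (-t) ≤ (covN d Δ P : ℝ) ∧ (covN d Δ P : ℝ) ≤ C * Δ ^ (-t)) →
      ∀ i j : ℕ, j ≤ i → i ≤ m * T →
        ∀ k : Fin d → ℤ,
          (covN d ((2:ℝ) ^ (-(i : ℤ))) (P ∩ dyCube d ((2:ℝ) ^ (-(j : ℤ))) k) : ℝ) ≤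
            K * (C / c) * (((2:ℝ) ^ (-(j : ℤ))) / ((2:ℝ) ^ (-(i : ℤ)))) ^ t := by
  obtain ⟨n₁, hn₁⟩ : ∃ n₁ : ℕ, 0 < Δ₀ → (2:ℝ) ^ (-(n₁ : ℤ)) ≤ Δ₀ := by
    by_cases hΔ₀ : 0 < Δ₀
    · obtain ⟨n₁, h⟩ := exists_two_zpow_neg_le hΔ₀
      exact ⟨n₁, fun _ => h⟩
    · exact ⟨0, fun h => absurd h hΔ₀⟩
  refine ⟨2 ^ (2 * (T * d) + 2 * (d * n₁)), by positivity, ?_⟩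
  intro m c C t P _ hc _ ht htd hδ hP hU hreg i j hji him k
  -- Cutting `n₁` down to `m T` keeps the range of scales nonempty, as `δ < Δ₀`.
  have hbounds : HasDyadicCountBounds P c C t (min n₁ (m * T)) (m * T) := by
    intro n hn₀n hnN
    have hΔ : (2:ℝ) ^ (-(n:ℤ)) ≤ Δ₀ := by
      rcases le_or_gt n₁ n with hn₁n | hnn₁
      · exact (zpow_le_zpow_right₀ one_le_two (by omega)).trans
          (hn₁ ((zpow_pos two_pos _).trans hδ))
      · obtain rfl : n = m * T := by omega
        exact hδ.le
    have := hreg _ (zpow_le_zpow_right₀ one_le_two (by omega)) hΔ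
    rwa [covN_eq_dyadicCount, two_zpow_neg_rpow_neg] at this
  rw [covN_eq_dyadicCount, dyCube_eq_preimage_dyadicIndex, two_zpow_neg_div_two_zpow_neg_rpow]
  refine (hU.dyadicCount_inter_le hT hP hbounds (min_le_right _ _) hc ht htd hji him k).trans ?_
  gcongr
  · exact one_le_two
  · exact min_le_left _ _

/-- if `P ⊆ [0,1)^d` is `{2^{-jT}}_{j=1}^m`-uniform with
`c·Δ^{-t} ≤ |P|_Δ ≤ C·Δ^{-t}` for all `Δ ∈ [δ,Δ₀]` (`δ = 2^{-mT}`), then for all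
dyadic `δ ≤ r ≤ R ≤ 1` and every dyadic `R`-cube `Q`,
`|P ∩ Q|_r ≲_{d,T,Δ₀} (C/c)(R/r)^t`. -/
theorem stmt12 (d T : ℕ) (Δ₀ : ℝ) (hT : 1 ≤ T) (hΔ₀1 : Δ₀ ≤ 1) :
    ∃ K : ℝ, 0 < K ∧
    ∀ (m : ℕ) (c C t : ℝ) (P : Set (EuclideanSpace ℝ (Fin d))),
      1 ≤ m → 0 < c → 0 < C → 0 ≤ t → t ≤ d →
      (2:ℝ) ^ (-((m * T : ℕ) : ℤ)) < Δ₀ →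
      P ⊆ unitBox d → IsUniform d T m P →
      (∀ Δ : ℝ, (2:ℝ) ^ (-((m * T : ℕ) : ℤ)) ≤ Δ → Δ ≤ Δ₀ →
        c * Δ ^ (-t) ≤ (covN d Δ P : ℝ) ∧ (covN d Δ P : ℝ) ≤ C * Δ ^ (-t)) →
      ∀ i j : ℕ, j ≤ i → i ≤ m * T →
        ∀ k : Fin d → ℤ,
          (covN d ((2:ℝ) ^ (-(i : ℤ))) (P ∩ dyCube d ((2:ℝ) ^ (-(j : ℤ))) k) : ℝ) ≤
            K * (C / c) * (((2:ℝ) ^ (-(j : ℤ))) / ((2:ℝ) ^ (-(i : ℤ)))) ^ t :=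
  stmt12_general d T Δ₀ hT
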